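/- Let F be the free group of rank m ≥ 2 and let x ∈ Σ. Then C[x] ∖ C(x^{-1},x) = {x} ∪ ⋃_{y ∈ Σ, y ≠ x^{-1}} C(y,x), the union being pairwise disjoint. Moreover, the set M = {1} ∪ (C[x] ∖ C(x^{-1},x)) is a submonoid of F with |uv| = |u| + |v| for all u, v ∈ M, and M is a thick monoid (M = L(A) for some Σ-complete special monoid automaton A). -/

import Mathlib

open Filter Set

noncomputable section

/-- The free group of rank `m`. -/
abbrev FG (m : ℕ) := FreeGroup (Fin m)

/-- The length of the reduced word of `g`. -/
def glen {m : ℕ} (g : FG m) : ℕ := (FreeGroup.toWord g).length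

/-- The cardinality of the sphere of radius `k` in the free group of rank `m`,
as a real number: `1` if `k = 0` and `2m(2m-1)^(k-1)` otherwise. -/
def sphereCard (m k : ℕ) : ℝ :=
  if k = 0 then 1 else 2 * (m : ℝ) * (2 * (m : ℝ) - 1) ^ (k - 1)

/-- `n_k(R)`: the number of elements of length `k` in `R`. -/
def nk {m : ℕ} (R : Set (FG m)) (k : ℕ) : ℕ := {g ∈ R | glen g = k}.ncard

/-- `f_k(R) = n_k(R) / |S_k|`: the frequency of elements of `R` among words of length `k`. -/
def fk {m : ℕ} (R : Set (FG m)) (k : ℕ) : ℝ := (nk R k : ℝ) / sphereCard m k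

/-- The frequency generating function `g_R(t) = ∑ f_k(R) t^k`. -/
def genFun {m : ℕ} (R : Set (FG m)) (t : ℝ) : ℝ := ∑' k : ℕ, fk R k * t ^ k

/-- The adjusted generating function `g*_R(t) = ∑ n_k(R) (t/(2m-1))^k`. -/
def genFunStar {m : ℕ} (R : Set (FG m)) (t : ℝ) : ℝ :=
  ∑' k : ℕ, (nk R k : ℝ) * (t / (2 * (m : ℝ) - 1)) ^ k

/-- `R` is thick: `lim_{t→1⁻} (1-t)·g_R(t)` exists and is positive. -/
def IsThick {m : ℕ} (R : Set (FG m)) : Prop :=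
  ∃ c : ℝ, 0 < c ∧
    Tendsto (fun t => (1 - t) * genFun R t) (nhdsWithin 1 (Set.Iio 1)) (nhds c)

/-- `R` is exponentially negligible (exponentially λ-measurable): there is `δ ∈ (0,1)`
with `f_k(R) < δ^k` for all sufficiently large `k`. -/
def ExpNegligible {m : ℕ} (R : Set (FG m)) : Prop :=
  ∃ δ : ℝ, 0 < δ ∧ δ < 1 ∧ ∀ᶠ k : ℕ in atTop, fk R k < δ ^ k

/-- `R ⊆ F` is a regular set if the language of reduced words of its elements
(over the alphabet `Σ = X ∪ X⁻¹`, encoded as `Fin m × Bool`) is a regular language. -/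
def IsRegularSet {m : ℕ} (R : Set (FG m)) : Prop :=
  Language.IsRegular {w : List (Fin m × Bool) | ∃ g ∈ R, FreeGroup.toWord g = w}

/-- The cone `C(w) = { wf : |wf| = |w| + |f| }`. -/
def cone {m : ℕ} (w : FG m) : Set (FG m) :=
  {g | ∃ f, g = w * f ∧ glen g = glen w + glen f}

/-- The right cone `C[w] = { fw : |fw| = |f| + |w| }`. -/
def coneR {m : ℕ} (w : FG m) : Set (FG m) :=
  {g | ∃ f, g = f * w ∧ glen g = glen f + glen w}

/-- The double-based cone `C(u,v) = { ufv : |ufv| = |u| + |f| + |v| }`. -/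
def dcone {m : ℕ} (u v : FG m) : Set (FG m) :=
  {g | ∃ f, g = u * f * v ∧ glen g = glen u + glen f + glen v}

/-- The prefix closure of `R`. -/
def prefixClosure {m : ℕ} (R : Set (FG m)) : Set (FG m) :=
  {p | ∃ g ∈ R, ∃ s, g = p * s ∧ glen g = glen p + glen s}

/-- A finite deterministic partial automaton over the alphabet
`Σ = X ∪ X⁻¹` (encoded as `Fin m × Bool`), with one initial and one final state. -/
structure PAut (m : ℕ) where
  n : ℕ
  step : Fin n → Fin m × Bool → Option (Fin n)
  start : Fin n
  accept : Fin n

namespace PAut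

variable {m : ℕ}

/-- Run the automaton from state `s` on the word `w`. -/
def evalFrom (A : PAut m) : Fin A.n → List (Fin m × Bool) → Option (Fin A.n)
  | s, [] => some s
  | s, a :: w =>
    match A.step s a with
    | none => none
    | some s' => A.evalFrom s' w

/-- The set of words accepted by `A`. -/
def words (A : PAut m) : Set (List (Fin m × Bool)) :=
  {w | A.evalFrom A.start w = some A.accept}

/-- The language of `A`, identified with a subset of the free group. -/
def lang (A : PAut m) : Set (FG m) :=
  (fun w => FreeGroup.mk w) '' A.words

/-- Conditions (c)–(f) of a special automaton:
(c) every state is reachable from the initial state;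
(d) the final state is reachable from every state;
(e) all transitions entering a given state carry the same label (the type of the state);
(f) if a state has type `x`, no transition labeled `x⁻¹` leaves it. -/
def CoreSpecial (A : PAut m) : Prop :=
  (∀ s, ∃ w, A.evalFrom A.start w = some s) ∧
  (∀ s, ∃ w, A.evalFrom s w = some A.accept) ∧
  (∀ s₁ a₁ s₂ a₂ s, A.step s₁ a₁ = some s → A.step s₂ a₂ = some s → a₁ = a₂) ∧
  (∀ s' a s, A.step s' a = some s → A.step s (a.1, !a.2) = none)

/-- A special automaton over the free group: conditions (a)–(f), with distinct
initial and final states and no transition entering the initial state. -/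
def IsSpecial (A : PAut m) : Prop :=
  A.start ≠ A.accept ∧ (∀ s a, A.step s a ≠ some A.start) ∧ A.CoreSpecial

/-- A special monoid automaton: conditions (c)–(f), with the initial state equal to
the final state. -/
def IsSpecialMonoidAut (A : PAut m) : Prop :=
  A.start = A.accept ∧ A.CoreSpecial

/-- `A` is `Σ`-complete: every state `s` has a type `x` and for every label
`y ≠ x⁻¹` the transition `δ(s,y)` is defined. -/
def SigmaComplete (A : PAut m) : Prop :=
  ∀ s, ∃ a, (∃ s', A.step s' a = some s) ∧
    ∀ b, b ≠ (a.1, !a.2) → (A.step s b).isSome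

end PAut

/-- A special monoid: the language of a special monoid automaton. -/
def IsSpecialMonoid {m : ℕ} (M : Set (FG m)) : Prop :=
  ∃ A : PAut m, A.IsSpecialMonoidAut ∧ M = A.lang

/-- A thick monoid: the language of a `Σ`-complete special monoid automaton. -/
def IsThickMonoid {m : ℕ} (M : Set (FG m)) : Prop :=
  ∃ A : PAut m, A.IsSpecialMonoidAut ∧ A.SigmaComplete ∧ M = A.lang

/-!
Let `a` be the letter spelling `x`. An element lies in `C[x] ∖ C(x⁻¹,x)` iff its reduced word ends
in `a` and does not begin with `a⁻¹`; together with `1` these are exactly the words `w` such that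
`a w` is reduced and ends in `a`. Two such words concatenate without cancellation, which gives
the monoid property and the additivity of length, and they are the labels of the loops at `a` in
the automaton whose states are the letters, the state being the last letter read. Since `m ≥ 2`,
a letter of another generator can be inserted between a letter and its inverse, so that
automaton is strongly connected.
-/

open FreeGroup

section

variable {m : ℕ}

lemma glen_eq_zero_iff {g : FG m} : glen g = 0 ↔ g = 1 := norm_eq_zero

lemma glen_mul_le (g h : FG m) : glen (g * h) ≤ glen g + glen h := norm_mul_le g h

lemma toWord_mk_of_isReduced {l : List (Fin m × Bool)} (hl : IsReduced l) :
    toWord (mk l) = l := by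
  rw [toWord_mk, hl.reduce_eq]

lemma toWord_mul_of_glen_mul {g h : FG m} (hgh : glen (g * h) = glen g + glen h) :
    toWord (g * h) = toWord g ++ toWord h :=
  (toWord_mul_sublist g h).eq_of_length (by rw [List.length_append]; exact hgh)

lemma toWord_mul_of_isReduced {g h : FG m} (hgh : IsReduced (toWord g ++ toWord h)) :
    toWord (g * h) = toWord g ++ toWord h := by
  rw [toWord_mul, hgh.reduce_eq]

lemma mem_coneR_iff {w g : FG m} : g ∈ coneR w ↔ toWord w <:+ toWord g := by
  constructor
  · rintro ⟨f, rfl, hlen⟩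
    exact ⟨toWord f, (toWord_mul_of_glen_mul hlen).symm⟩
  · rintro ⟨l, hl⟩
    have hred : IsReduced l := isReduced_toWord.infix (List.IsPrefix.isInfix ⟨toWord w, hl⟩)
    refine ⟨mk l, ?_, ?_⟩
    · rw [← mk_toWord (x := g), ← hl, ← mul_mk, mk_toWord]
    · simp only [glen, ← hl, toWord_mk_of_isReduced hred, List.length_append]

lemma mem_dcone_iff {u v g : FG m} :
    g ∈ dcone u v ↔ ∃ l, toWord g = toWord u ++ l ++ toWord v := by
  constructor
  · rintro ⟨f, rfl, hlen⟩
    have h₁ := glen_mul_le u f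
    have h₂ := glen_mul_le (u * f) v
    have huf : glen (u * f) = glen u + glen f := by omega
    have hufv : glen (u * f * v) = glen (u * f) + glen v := by omega
    exact ⟨toWord f, by rw [toWord_mul_of_glen_mul hufv, toWord_mul_of_glen_mul huf]⟩
  · rintro ⟨l, hl⟩
    have hred : IsReduced l := isReduced_toWord.infix ⟨toWord u, toWord v, hl.symm⟩
    refine ⟨mk l, ?_, ?_⟩
    · rw [← mk_toWord (x := g), hl, ← mul_mk, ← mul_mk, mk_toWord, mk_toWord]
    · simp only [glen, hl, toWord_mk_of_isReduced hred, List.length_append]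

lemma coneR_eq_insert_iUnion_dcone (w : FG m) :
    coneR w = insert w (⋃ y ∈ {y : FG m | glen y = 1}, dcone y w) := by
  ext g
  simp only [Set.mem_insert_iff, Set.mem_iUnion, Set.mem_ofPred_eq, exists_prop,
    mem_coneR_iff, mem_dcone_iff]
  constructor
  · rintro ⟨_ | ⟨c, l⟩, hl⟩
    · exact Or.inl (toWord_injective hl.symm)
    · have hc : toWord (mk [c]) = [c] := toWord_mk_of_isReduced .singleton
      exact Or.inr ⟨mk [c], by rw [glen, hc]; rfl, l, by rw [hc, ← hl]; rfl⟩
  · rintro (rfl | ⟨y, -, l, hl⟩)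
    · exact List.suffix_refl _
    · exact ⟨toWord y ++ l, hl.symm⟩

lemma notMem_dcone_self {y w : FG m} (hy : y ≠ 1) : w ∉ dcone y w := by
  rintro ⟨f, -, hlen⟩
  have : glen y ≠ 0 := glen_eq_zero_iff.not.mpr hy
  omega

lemma disjoint_dcone_of_glen_eq {y y' w : FG m} (hlen : glen y = glen y') (hne : y ≠ y') :
    Disjoint (dcone y w) (dcone y' w) := by
  refine Set.disjoint_left.mpr fun g hg hg' => hne ?_
  obtain ⟨l, hl⟩ := mem_dcone_iff.mp hg
  obtain ⟨l', hl'⟩ := mem_dcone_iff.mp hg'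
  rw [hl, List.append_assoc, List.append_assoc] at hl'
  exact toWord_injective (List.append_inj hl' hlen).1

lemma coneR_sdiff_dcone_inv_eq {x : FG m} (hx : glen x = 1) :
    coneR x \ dcone x⁻¹ x = {x} ∪ ⋃ y ∈ {y : FG m | glen y = 1 ∧ y ≠ x⁻¹}, dcone y x := by
  have hx' : glen x⁻¹ = 1 := (norm_inv_eq (x := x)).trans hx
  have hxne : x⁻¹ ≠ 1 := glen_eq_zero_iff.not.mp (by omega)
  rw [coneR_eq_insert_iUnion_dcone]
  ext g
  simp only [Set.mem_sdiff, Set.mem_insert_iff, Set.mem_union, Set.mem_singleton_iff,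
    Set.mem_iUnion, Set.mem_ofPred_eq, exists_prop]
  constructor
  · rintro ⟨rfl | ⟨y, hy, hg⟩, hg'⟩
    · exact Or.inl rfl
    · exact Or.inr ⟨y, ⟨hy, by rintro rfl; exact hg' hg⟩, hg⟩
  · rintro (rfl | ⟨y, ⟨hy, hyx⟩, hg⟩)
    · exact ⟨Or.inl rfl, notMem_dcone_self hxne⟩
    · exact ⟨Or.inr ⟨y, hy, hg⟩,
        Set.disjoint_left.mp (disjoint_dcone_of_glen_eq (hy.trans hx'.symm) hyx) hg⟩

lemma ne_inv_letter_iff {a c : Fin m × Bool} : c ≠ (a.1, !a.2) ↔ (a.1 = c.1 → a.2 = c.2) := by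
  obtain ⟨i, s⟩ := a
  obtain ⟨j, t⟩ := c
  cases s <;> cases t <;> simp [eq_comm]

def loopWords (a : Fin m × Bool) : Set (List (Fin m × Bool)) :=
  {w | IsReduced (a :: w) ∧ w.getLastD a = a}

lemma append_mem_loopWords {a : Fin m × Bool} {w w' : List (Fin m × Bool)}
    (hw : w ∈ loopWords a) (hw' : w' ∈ loopWords a) : w ++ w' ∈ loopWords a := by
  obtain ⟨hred, hlast⟩ := hw
  obtain ⟨hred', hlast'⟩ := hw'
  obtain ⟨L, hL⟩ : [a] <:+ a :: w :=
    List.singleton_suffix_iff_getLast?_eq_some.mpr (by simpa [List.getLast?_cons] using hlast)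
  refine ⟨?_, ?_⟩
  · rw [← List.cons_append, ← hL]
    exact IsReduced.append_overlap (by rwa [hL]) hred' (List.cons_ne_nil a [])
  · simp only [List.getLastD_eq_getLast?, List.getLast?_append] at *
    cases h : w'.getLast? <;> simp_all

lemma mem_coneR_sdiff_dcone_inv_iff {x g : FG m} {a : Fin m × Bool} (hx : toWord x = [a]) :
    g ∈ coneR x \ dcone x⁻¹ x ↔ toWord g ≠ [] ∧ toWord g ∈ loopWords a := by
  have hxinv : toWord x⁻¹ = [(a.1, !a.2)] := by rw [toWord_inv, hx]; rfl
  rw [Set.mem_sdiff, mem_coneR_iff, mem_dcone_iff, hx, hxinv]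
  have hred := isReduced_toWord (x := g)
  generalize toWord g = w at hred ⊢
  rcases w with _ | ⟨c, t⟩
  · simp
  have hlast : [a] <:+ c :: t ↔ (c :: t).getLastD a = a := by
    simp [List.singleton_suffix_iff_getLast?_eq_some, List.getLast?_cons]
  simp only [loopWords, Set.mem_ofPred_eq, isReduced_cons_cons, ← ne_inv_letter_iff, hred,
    ← hlast, ne_eq, List.cons_ne_nil, not_false_eq_true, and_true, true_and]
  constructor
  · rintro ⟨⟨L, hL⟩, hn⟩
    refine ⟨fun hc => hn ?_, L, hL⟩
    subst hc
    rcases L with _ | ⟨b, L⟩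
    · simp [Prod.ext_iff] at hL
    · exact ⟨L, by simp_all⟩
  · rintro ⟨hc, hsuf⟩
    exact ⟨hsuf, fun ⟨l, h⟩ => hc (List.cons.inj h).1⟩

lemma insert_one_coneR_sdiff_dcone_inv_eq {x : FG m} {a : Fin m × Bool} (hx : toWord x = [a]) :
    insert 1 (coneR x \ dcone x⁻¹ x) = toWord ⁻¹' loopWords a := by
  ext g
  have hnil : [] ∈ loopWords a := ⟨.singleton, rfl⟩
  rw [Set.mem_insert_iff, mem_coneR_sdiff_dcone_inv_iff hx, ← toWord_eq_nil_iff, Set.mem_preimage]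
  by_cases h : toWord g = [] <;> simp_all

lemma toWord_mul_of_mem_loopWords {a : Fin m × Bool} {u v : FG m} (hu : toWord u ∈ loopWords a)
    (hv : toWord v ∈ loopWords a) : toWord (u * v) = toWord u ++ toWord v :=
  toWord_mul_of_isReduced ((append_mem_loopWords hu hv).1.infix (List.suffix_cons _ _).isInfix)

lemma exists_isReduced_cons_getLastD (hm : 2 ≤ m) (d e : Fin m × Bool) :
    ∃ w, IsReduced (d :: w) ∧ w.getLastD d = e := by
  by_cases hde : d.1 = e.1 → d.2 = e.2
  · exact ⟨[e], isReduced_cons_cons.mpr ⟨hde, .singleton⟩, rfl⟩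
  · have : Nontrivial (Fin m) := Fin.nontrivial_iff_two_le.mpr hm
    obtain ⟨j, hj⟩ := exists_ne d.1
    refine ⟨[(j, true), e], ?_, rfl⟩
    push Not at hde
    simp [isReduced_cons_cons, hj.symm, hde.1 ▸ hj]

def letterIndex (m : ℕ) : (Fin m × Bool) ≃ Fin (Fintype.card (Fin m × Bool)) :=
  Fintype.equivFin _

def letterAut (a : Fin m × Bool) : PAut m where
  n := Fintype.card (Fin m × Bool)
  step s c :=
    let d := (letterIndex m).symm s
    if d.1 = c.1 → d.2 = c.2 then some (letterIndex m c) else none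
  start := letterIndex m a
  accept := letterIndex m a

lemma letterAut_step_eq_some {a c : Fin m × Bool} {s t : Fin (letterAut a).n}
    (h : (letterAut a).step s c = some t) : t = letterIndex m c := by
  simp only [letterAut] at h
  split_ifs at h
  exact (Option.some.inj h).symm

lemma letterAut_step (a d c : Fin m × Bool) :
    (letterAut a).step (letterIndex m d) c =
      if d.1 = c.1 → d.2 = c.2 then some (letterIndex m c) else none := by
  simp [letterAut]

lemma letterAut_evalFrom_eq_some_iff {a d : Fin m × Bool} {w : List (Fin m × Bool)}
    {s : Fin (Fintype.card (Fin m × Bool))} :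
    (letterAut a).evalFrom (letterIndex m d) w = some s ↔
      IsReduced (d :: w) ∧ letterIndex m (w.getLastD d) = s := by
  induction w generalizing d with
  | nil => exact ⟨fun h => ⟨.singleton, Option.some.inj h⟩, fun h => congrArg some h.2⟩
  | cons c w ih =>
    simp only [PAut.evalFrom, letterAut_step, isReduced_cons_cons, List.getLastD_cons]
    by_cases hdc : d.1 = c.1 → d.2 = c.2
    · rw [if_pos hdc]
      exact ih.trans (by rw [and_assoc, iff_and_self]; exact fun _ => hdc)
    · rw [if_neg hdc]
      simp [hdc]

lemma letterAut_words (a : Fin m × Bool) : (letterAut a).words = loopWords a := by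
  ext w
  change (letterAut a).evalFrom (letterIndex m a) w = some (letterIndex m a) ↔ _
  rw [letterAut_evalFrom_eq_some_iff, (letterIndex m).apply_eq_iff_eq]
  rfl

lemma letterAut_isSpecialMonoidAut (hm : 2 ≤ m) (a : Fin m × Bool) :
    (letterAut a).IsSpecialMonoidAut := by
  have reach (d e : Fin m × Bool) :
      ∃ w, (letterAut a).evalFrom (letterIndex m d) w = some (letterIndex m e) := by
    obtain ⟨w, hred, hlast⟩ := exists_isReduced_cons_getLastD hm d e
    exact ⟨w, letterAut_evalFrom_eq_some_iff.mpr ⟨hred, by rw [hlast]⟩⟩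
  refine ⟨rfl, fun s => ?_, fun s => ?_, fun s₁ c₁ s₂ c₂ s h₁ h₂ => ?_, fun s c t h => ?_⟩
  · obtain ⟨d, rfl⟩ := (letterIndex m).surjective s
    exact reach a d
  · obtain ⟨d, rfl⟩ := (letterIndex m).surjective s
    exact reach d a
  · exact (letterIndex m).injective ((letterAut_step_eq_some h₁).symm.trans
      (letterAut_step_eq_some h₂))
  · rw [letterAut_step_eq_some h, letterAut_step, if_neg (by simp)]
    rfl

lemma letterAut_sigmaComplete (a : Fin m × Bool) : (letterAut a).SigmaComplete := by
  intro s
  obtain ⟨d, rfl⟩ := (letterIndex m).surjective s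
  refine ⟨d, ⟨letterIndex m d, by rw [letterAut_step, if_pos fun _ => rfl]; rfl⟩, fun c hc => ?_⟩
  rw [letterAut_step, if_pos (ne_inv_letter_iff.mp hc)]
  rfl

lemma lang_letterAut (a : Fin m × Bool) : (letterAut a).lang = toWord ⁻¹' loopWords a := by
  ext g
  rw [PAut.lang, letterAut_words]
  constructor
  · rintro ⟨w, hw, rfl⟩
    rwa [Set.mem_preimage, toWord_mk_of_isReduced (hw.1.infix (List.suffix_cons _ _).isInfix)]
  · exact fun hg => ⟨toWord g, hg, mk_toWord⟩

end

/-- for a letter `x`, `C[x] ∖ C(x⁻¹,x)` is the disjoint union of `{x}`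
and the double-based cones `C(y,x)` over letters `y ≠ x⁻¹`; moreover
`M = {1} ∪ (C[x] ∖ C(x⁻¹,x))` is a submonoid with additive lengths and a thick monoid. -/
theorem stmt8 {m : ℕ} (hm : 2 ≤ m) (x : FG m) (hx : glen x = 1) :
    (coneR x \ dcone x⁻¹ x
      = {x} ∪ ⋃ y ∈ {y : FG m | glen y = 1 ∧ y ≠ x⁻¹}, dcone y x) ∧
    (∀ y : FG m, glen y = 1 → y ≠ x⁻¹ → x ∉ dcone y x) ∧
    (∀ y y' : FG m, glen y = 1 → y ≠ x⁻¹ → glen y' = 1 → y' ≠ x⁻¹ → y ≠ y' →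
      Disjoint (dcone y x) (dcone y' x)) ∧
    (∀ u ∈ insert (1 : FG m) (coneR x \ dcone x⁻¹ x),
      ∀ v ∈ insert (1 : FG m) (coneR x \ dcone x⁻¹ x),
        u * v ∈ insert (1 : FG m) (coneR x \ dcone x⁻¹ x) ∧
        glen (u * v) = glen u + glen v) ∧
    IsThickMonoid (insert (1 : FG m) (coneR x \ dcone x⁻¹ x)) := by
  obtain ⟨a, ha⟩ := List.length_eq_one_iff.mp hx
  have hM := insert_one_coneR_sdiff_dcone_inv_eq ha
  refine ⟨coneR_sdiff_dcone_inv_eq hx,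
    fun y hy _ => notMem_dcone_self (glen_eq_zero_iff.not.mp (by omega)),
    fun y y' hy _ hy' _ hne => disjoint_dcone_of_glen_eq (hy.trans hy'.symm) hne, ?_,
    ⟨letterAut a, letterAut_isSpecialMonoidAut hm a, letterAut_sigmaComplete a,
      by rw [hM, lang_letterAut]⟩⟩
  rw [hM]
  intro u hu v hv
  have huv := toWord_mul_of_mem_loopWords hu hv
  refine ⟨?_, by simp only [glen, huv, List.length_append]⟩
  rw [Set.mem_preimage, huv]
  exact append_mem_loopWords hu hv
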